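/- Let G be a group equipped with the word metric d_S with respect to a finite generating set S, and let H ≤ G be a subgroup. A subset C ⊆ G is H-almost invariant if and only if C is a coarse complementary component of H. -/

import Mathlib

open Metric Set
open scoped NNReal Pointwise

/-- The closed `r`-neighbourhood `N_r(A)` of a subset `A` of a metric space. -/
def nbhd {X : Type*} [PseudoMetricSpace X] (r : ℝ≥0) (A : Set X) : Set X :=
  {x : X | ∃ a ∈ A, nndist x a ≤ r}

/-- The word length of `g` with respect to a generating set `S`: the least `n` such
that `g` is a product of `n` elements of `S ∪ S⁻¹`. -/
noncomputable def wordLength {G : Type*} [Group G] (S : Set G) (g : G) : ℕ :=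
  sInf {n : ℕ | ∃ l : List G, (∀ x ∈ l, x ∈ S ∨ x⁻¹ ∈ S) ∧ l.prod = g ∧ l.length = n}

/-- The metric on `G` is the word metric with respect to `S`. -/
def IsWordMetric {G : Type*} [Group G] [MetricSpace G] (S : Set G) : Prop :=
  ∀ g h : G, dist g h = wordLength S (g⁻¹ * h)

/-- A subset `A ⊆ G` is `H`-finite if `A ⊆ H·R` for some finite `R ⊆ G`. -/
def HFinite {G : Type*} [Group G] (H : Subgroup G) (A : Set G) : Prop :=
  ∃ R : Set G, R.Finite ∧ A ⊆ (H : Set G) * R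

/-- The coarse `r`-boundary `∂_r C := {x ∈ X \ C : d(x,C) ≤ r}`. -/
def coarseBoundary {X : Type*} [PseudoMetricSpace X] (r : ℝ≥0) (C : Set X) : Set X :=
  {x : X | x ∉ C ∧ ∃ c ∈ C, nndist x c ≤ r}

/-- `C` is an `(r,A)`-coarse complementary component of `W`:
`∂_r (C \ N_A(W)) ⊆ N_A(W)`. -/
def IsCCC {X : Type*} [PseudoMetricSpace X] (r A : ℝ≥0) (W C : Set X) : Prop :=
  coarseBoundary r (C \ nbhd A W) ⊆ nbhd A W

/-- `C` is a coarse complementary component of `W`, i.e. an `(r,A)`-coarse complementary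
component for some `r ≥ 1`, `A ≥ 0`. -/
def IsCoarseCompComplement {X : Type*} [PseudoMetricSpace X] (W C : Set X) : Prop :=
  ∃ r A : ℝ≥0, 1 ≤ r ∧ IsCCC r A W C

/-- A coarse complementary component is shallow if contained in some neighbourhood of
`W`, and deep otherwise. -/
def IsShallow {X : Type*} [PseudoMetricSpace X] (W C : Set X) : Prop :=
  ∃ R : ℝ≥0, C ⊆ nbhd R W

/-- A subset `C ⊆ G` is `H`-almost invariant if for every `g ∈ G` the symmetric
difference of `C` and `Cg` is `H`-finite. -/
def HAlmostInvariant {G : Type*} [Group G] (H : Subgroup G) (C : Set G) : Prop :=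
  ∀ g : G, HFinite H (symmDiff C ((fun x => x * g) '' C))

/-!
Both conditions say that `C` has a boundary lying within bounded distance of `H`. If `C` is
`H`-almost invariant, a point just outside `C` next to `c ∈ C` lies in `C b \ C` for `b` in the
finite unit ball, so it is close to `H`. Conversely, if `C` is a coarse complementary component,
follow a geodesic word for `g` from `c ∈ C` to `c g ∉ C`: either `c ∈ N_A(H)`, or the path leaves
`C \ N_A(H)` through its coarse boundary, which lies in `N_A(H)`; either way `c g` is within
`A + |g|` of `H`. Finiteness of balls turns "within bounded distance of `H`" into `H`-finiteness.
-/

section Neighbourhood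

variable {X : Type*} [PseudoMetricSpace X]

lemma nbhd_mono {r s : ℝ≥0} (h : r ≤ s) (W : Set X) : nbhd r W ⊆ nbhd s W :=
  fun _ ⟨a, ha, hd⟩ => ⟨a, ha, hd.trans h⟩

lemma mem_nbhd_of_nndist_le {W : Set X} {x y : X} {r s : ℝ≥0} (hy : y ∈ nbhd r W)
    (hxy : nndist x y ≤ s) : x ∈ nbhd (r + s) W := by
  obtain ⟨a, ha, hya⟩ := hy
  refine ⟨a, ha, ?_⟩
  calc nndist x a ≤ nndist x y + nndist y a := nndist_triangle x y a
    _ ≤ s + r := add_le_add hxy hya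
    _ = r + s := add_comm s r

lemma nbhd_nbhd_subset (r s : ℝ≥0) (W : Set X) : nbhd s (nbhd r W) ⊆ nbhd (r + s) W :=
  fun _ ⟨_, hy, hxy⟩ => mem_nbhd_of_nndist_le hy hxy

end Neighbourhood

lemma wordLength_list_prod_le {G : Type*} [Group G] {S : Set G} {l : List G}
    (hl : ∀ x ∈ l, x ∈ S ∨ x⁻¹ ∈ S) : wordLength S l.prod ≤ l.length :=
  Nat.sInf_le ⟨l, hl, rfl, rfl⟩

namespace IsWordMetric

variable {G : Type*} [Group G] [MetricSpace G] {S : Set G}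

lemma nndist_eq (hword : IsWordMetric S) (x y : G) :
    nndist x y = wordLength S (x⁻¹ * y) :=
  NNReal.eq (hword x y)

lemma nndist_mul_left (hword : IsWordMetric S) (g x y : G) :
    nndist (g * x) (g * y) = nndist x y := by
  simp only [hword.nndist_eq, mul_inv_rev, mul_assoc, inv_mul_cancel_left]

lemma wordLength_inv (hword : IsWordMetric S) (g : G) : wordLength S g⁻¹ = wordLength S g := by
  simpa [hword.nndist_eq] using nndist_comm (1 : G) g⁻¹

lemma nndist_mul_list_prod_le (hword : IsWordMetric S) (x : G) {l : List G}
    (hl : ∀ t ∈ l, t ∈ S ∨ t⁻¹ ∈ S) : nndist x (x * l.prod) ≤ l.length := by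
  rw [hword.nndist_eq, inv_mul_cancel_left]
  exact_mod_cast wordLength_list_prod_le hl

/-- The metric axioms force `S` to generate `G`: an element that is not a word in `S ∪ S⁻¹`
would get word length `sInf ∅ = 0`, hence be at distance `0` from `1`. -/
lemma exists_word (hword : IsWordMetric S) (g : G) :
    ∃ l : List G, (∀ x ∈ l, x ∈ S ∨ x⁻¹ ∈ S) ∧ l.prod = g ∧ l.length = wordLength S g := by
  have hne : {n : ℕ | ∃ l : List G, (∀ x ∈ l, x ∈ S ∨ x⁻¹ ∈ S) ∧ l.prod = g ∧
      l.length = n}.Nonempty := by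
    by_contra hempty
    rw [Set.not_nonempty_iff_eq_empty] at hempty
    have hg : (1 : G) = g := by
      rw [← dist_eq_zero, hword, inv_one, one_mul, wordLength, hempty, Nat.sInf_empty, Nat.cast_zero]
    exact hempty.subset ⟨[], by simp, hg, rfl⟩
  exact Nat.sInf_mem hne

lemma finite_closedBall (hSfin : S.Finite) (hword : IsWordMetric S) (x : G) (r : ℝ) :
    (closedBall x r).Finite := by
  let T : Set G := {t | t ∈ S ∨ t⁻¹ ∈ S}
  have : Finite T := ((hSfin.union hSfin.inv).subset fun _ ht => ht).to_subtype
  refine ((List.finite_length_le T ⌊r⌋₊).image fun l => x * (l.map Subtype.val).prod).subset ?_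
  intro y hy
  obtain ⟨l, hl, hprod, hlen⟩ := hword.exists_word (x⁻¹ * y)
  lift l to List T using hl
  refine ⟨l, ?_, by simp only [hprod, mul_inv_cancel_left]⟩
  rw [mem_closedBall, dist_comm, hword, ← hlen, List.length_map] at hy
  exact Nat.le_floor hy

lemma hFinite_iff_subset_nbhd (hSfin : S.Finite) (hword : IsWordMetric S) (H : Subgroup G)
    (A : Set G) : HFinite H A ↔ ∃ ρ : ℝ≥0, A ⊆ nbhd ρ (H : Set G) := by
  constructor
  · rintro ⟨R, hR, hAR⟩
    obtain ⟨ρ, hρ⟩ := (hR.image (nndist · 1)).bddAbove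
    refine ⟨ρ, fun a ha => ?_⟩
    obtain ⟨h, hh, x, hx, rfl⟩ := hAR ha
    refine ⟨h, hh, ?_⟩
    calc nndist (h * x) h = nndist x 1 := by
          rw [← hword.nndist_mul_left h x 1, mul_one]
      _ ≤ ρ := hρ ⟨x, hx, rfl⟩
  · rintro ⟨ρ, hAρ⟩
    refine ⟨closedBall 1 ρ, hword.finite_closedBall hSfin 1 ρ, fun x hx => ?_⟩
    obtain ⟨h, hh, hxh⟩ := hAρ hx
    refine ⟨h, hh, h⁻¹ * x, ?_, mul_inv_cancel_left h x⟩
    rw [mem_closedBall, ← coe_nndist, NNReal.coe_le_coe, ← hword.nndist_mul_left h,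
      mul_inv_cancel_left, mul_one]
    exact hxh

/-- Walking along a word from a point of `D` to a point outside `D`, the last point still in `D`
is followed by a point of `∂_r D ⊆ N`. -/
lemma mul_list_prod_mem_nbhd (hword : IsWordMetric S) {r : ℝ≥0} (hr : 1 ≤ r) {D N : Set G}
    (hDN : coarseBoundary r D ⊆ N) {l : List G} (hl : ∀ t ∈ l, t ∈ S ∨ t⁻¹ ∈ S) {x : G}
    (hx : x ∈ D) (hxl : x * l.prod ∉ D) : x * l.prod ∈ nbhd l.length N := by
  induction l generalizing x with
  | nil => simp_all
  | cons t l ih =>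
    have ht : ∀ u ∈ [t], u ∈ S ∨ u⁻¹ ∈ S := by simpa using hl t List.mem_cons_self
    have hl' : ∀ u ∈ l, u ∈ S ∨ u⁻¹ ∈ S := fun u hu => hl u (List.mem_cons_of_mem t hu)
    rw [List.prod_cons, ← mul_assoc] at hxl ⊢
    have hlen : (l.length : ℝ≥0) ≤ (t :: l).length := by
      rw [List.length_cons, Nat.cast_succ]
      exact le_self_add
    refine nbhd_mono hlen N ?_
    by_cases hxt : x * t ∈ D
    · exact ih hl' hxt hxl
    · have hxtN : x * t ∈ N := by
        refine hDN ⟨hxt, x, hx, ?_⟩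
        rw [nndist_comm]
        simpa using ((hword.nndist_mul_list_prod_le x ht).trans_eq (by simp)).trans hr
      refine ⟨x * t, hxtN, ?_⟩
      rw [nndist_comm]
      exact hword.nndist_mul_list_prod_le _ hl'

end IsWordMetric

namespace IsCCC

variable {G : Type*} [Group G] [MetricSpace G] {S : Set G} {r A : ℝ≥0} {W C : Set G}

lemma mul_mem_nbhd (hword : IsWordMetric S) (hr : 1 ≤ r) (hC : IsCCC r A W C) {c g : G}
    (hc : c ∈ C) (hcg : c * g ∉ C) : c * g ∈ nbhd (A + wordLength S g) W := by
  obtain ⟨l, hl, rfl, hlen⟩ := hword.exists_word g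
  rw [← hlen]
  by_cases hcA : c ∈ nbhd A W
  · refine mem_nbhd_of_nndist_le hcA ?_
    rw [nndist_comm]
    exact hword.nndist_mul_list_prod_le c hl
  · exact nbhd_nbhd_subset A _ W
      (hword.mul_list_prod_mem_nbhd hr hC hl ⟨hc, hcA⟩ fun h => hcg h.1)

lemma symmDiff_mul_subset_nbhd (hword : IsWordMetric S) (hr : 1 ≤ r) (hC : IsCCC r A W C)
    (g : G) : symmDiff C ((fun x => x * g) '' C) ⊆ nbhd (A + 2 * wordLength S g) W := by
  have hle : A + wordLength S g ≤ A + 2 * wordLength S g := by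
    rw [two_mul, ← add_assoc]
    exact le_self_add
  rintro x (⟨hx, hxg⟩ | ⟨⟨c, hc, rfl⟩, hcg⟩)
  · have hxg' : x * g⁻¹ ∉ C := fun h => hxg ⟨x * g⁻¹, h, inv_mul_cancel_right x g⟩
    have hnear := hC.mul_mem_nbhd hword hr hx hxg'
    rw [hword.wordLength_inv] at hnear
    have hdist : nndist x (x * g⁻¹) = wordLength S g := by
      rw [hword.nndist_eq, inv_mul_cancel_left, hword.wordLength_inv]
    rw [two_mul, ← add_assoc]
    exact mem_nbhd_of_nndist_le hnear hdist.le
  · exact nbhd_mono hle W (hC.mul_mem_nbhd hword hr hc hcg)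

end IsCCC

lemma isCCC_of_symmDiff_mul_subset_nbhd {G : Type*} [Group G] [MetricSpace G] {S : Set G}
    (hSfin : S.Finite) (hword : IsWordMetric S) {W C : Set G} {ρ : G → ℝ≥0}
    (hρ : ∀ g, symmDiff C ((fun x => x * g) '' C) ⊆ nbhd (ρ g) W) (r : ℝ≥0) :
    ∃ A, IsCCC r A W C := by
  obtain ⟨A, hA⟩ := ((hword.finite_closedBall hSfin 1 r).image ρ).bddAbove
  refine ⟨A, ?_⟩
  rintro x ⟨hxD, c, ⟨hc, hcA⟩, hxc⟩
  by_cases hx : x ∈ C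
  · by_contra hxA
    exact hxD ⟨hx, hxA⟩
  · set b := c⁻¹ * x
    have hb : b ∈ closedBall 1 r := by
      rw [mem_closedBall, ← coe_nndist, NNReal.coe_le_coe, ← hword.nndist_mul_left c,
        mul_inv_cancel_left, mul_one]
      exact hxc
    have hxb : x ∈ symmDiff C ((fun y => y * b) '' C) :=
      Or.inr ⟨⟨c, hc, mul_inv_cancel_left c x⟩, hx⟩
    exact nbhd_mono (hA ⟨b, hb, rfl⟩) W (hρ b hxb)

theorem hAlmostInvariant_iff_coarseComp_general {G : Type*} [Group G] [MetricSpace G]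
    (S : Set G) (hSfin : S.Finite)
    (hword : IsWordMetric S) (H : Subgroup G) (C : Set G) :
    HAlmostInvariant H C ↔ IsCoarseCompComplement (H : Set G) C := by
  have hAI : HAlmostInvariant H C ↔
      ∃ ρ : G → ℝ≥0, ∀ g, symmDiff C ((fun x => x * g) '' C) ⊆ nbhd (ρ g) (H : Set G) := by
    simp only [HAlmostInvariant, hword.hFinite_iff_subset_nbhd hSfin]
    exact Classical.skolem
  rw [hAI]
  constructor
  · rintro ⟨ρ, hρ⟩
    obtain ⟨A, hA⟩ := isCCC_of_symmDiff_mul_subset_nbhd hSfin hword hρ 1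
    exact ⟨1, A, le_rfl, hA⟩
  · rintro ⟨r, A, hr, hC⟩
    exact ⟨_, hC.symmDiff_mul_subset_nbhd hword hr⟩

/-- Let `G` be a group with the word metric with respect to a finite
generating set `S`, and `H ≤ G` a subgroup. A subset `C ⊆ G` is `H`-almost invariant iff
`C` is a coarse complementary component of `H`. -/
theorem hAlmostInvariant_iff_coarseComp {G : Type*} [Group G] [MetricSpace G]
    (S : Set G) (hSfin : S.Finite) (hSgen : Subgroup.closure S = ⊤)
    (hword : IsWordMetric S) (H : Subgroup G) (C : Set G) :
    HAlmostInvariant H C ↔ IsCoarseCompComplement (H : Set G) C :=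
  hAlmostInvariant_iff_coarseComp_general S hSfin hword H C
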